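/- Let F be a commutative ring and let A = (a_{ij}) ∈ M_3(F) satisfy a_{33} = 0. Let Ψ_{33}(A) be the matrix obtained from A by replacing a_{11} with −a_{11} and a_{22} with −a_{22} (all other entries unchanged). Then per A = det Ψ_{33}(A). In particular, over any field, the linear map Ψ_{33} restricts to a bijection from {A ∈ M_3(F) : per A = 0, a_{33} = 0} onto {A ∈ M_3(F) : det A = 0, a_{33} = 0}. -/
import Mathlib


/-- The map `Ψ₃₃` flipping the signs of the `(1,1)` and `(2,2)` entries of a
`3×3` matrix. -/
def Psi33 {F : Type*} [CommRing F] (A : Matrix (Fin 3) (Fin 3) F) :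
    Matrix (Fin 3) (Fin 3) F :=
  Matrix.of fun i j => if (i = 0 ∧ j = 0) ∨ (i = 1 ∧ j = 1) then -A i j else A i j

open Equiv in
lemma permanent_fin_three {F : Type} [CommRing F] (A : Matrix (Fin 3) (Fin 3) F) :
    A.permanent = A 0 0 * A 1 1 * A 2 2 + A 0 0 * A 1 2 * A 2 1
      + A 0 1 * A 1 0 * A 2 2 + A 0 1 * A 1 2 * A 2 0
      + A 0 2 * A 1 0 * A 2 1 + A 0 2 * A 1 1 * A 2 0 := by
  have : (Finset.univ : Finset (Perm (Fin 3))) =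
      {1, swap 0 1, swap 0 2, swap 1 2, swap 0 1 * swap 1 2, swap 0 2 * swap 1 2} := by decide
  rw [Matrix.permanent, this]
  repeat rw [Finset.sum_insert (by decide)]
  rw [Finset.sum_singleton]
  simp only [Fin.prod_univ_three]
  have e : ∀ (σ : Perm (Fin 3)) (i j : Fin 3), σ i = j → A (σ i) i = A j i := fun σ i j h => by rw [h]
  rw [e 1 0 0 (by decide), e 1 1 1 (by decide), e 1 2 2 (by decide),
      e (swap 0 1) 0 1 (by decide), e (swap 0 1) 1 0 (by decide), e (swap 0 1) 2 2 (by decide),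
      e (swap 0 2) 0 2 (by decide), e (swap 0 2) 1 1 (by decide), e (swap 0 2) 2 0 (by decide),
      e (swap 1 2) 0 0 (by decide), e (swap 1 2) 1 2 (by decide), e (swap 1 2) 2 1 (by decide),
      e (swap 0 1 * swap 1 2) 0 1 (by decide), e (swap 0 1 * swap 1 2) 1 2 (by decide),
      e (swap 0 1 * swap 1 2) 2 0 (by decide),
      e (swap 0 2 * swap 1 2) 0 2 (by decide), e (swap 0 2 * swap 1 2) 1 0 (by decide),
      e (swap 0 2 * swap 1 2) 2 1 (by decide)]
  ring

lemma Psi33_apply {F : Type*} [CommRing F] (A : Matrix (Fin 3) (Fin 3) F) (i j : Fin 3) :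
    Psi33 A i j = if (i = 0 ∧ j = 0) ∨ (i = 1 ∧ j = 1) then -A i j else A i j := rfl

lemma Psi33_involutive {F : Type*} [CommRing F] (A : Matrix (Fin 3) (Fin 3) F) :
    Psi33 (Psi33 A) = A := by
  ext i j
  simp only [Psi33_apply]
  split <;> simp

lemma key {F : Type} [CommRing F] (A : Matrix (Fin 3) (Fin 3) F) (h : A 2 2 = 0) :
    A.permanent = (Psi33 A).det := by
  rw [permanent_fin_three, Matrix.det_fin_three]
  simp only [Psi33_apply, Fin.ext_iff]
  norm_num [h]

/-- If `A ∈ M₃(F)` over a commutative ring `F` has `a₃₃ = 0`, then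
`per A = det (Ψ₃₃ A)`. In particular, over any field `Ψ₃₃` restricts to a bijection
from `{A : per A = 0, a₃₃ = 0}` onto `{A : det A = 0, a₃₃ = 0}`. -/
theorem permanent_eq_det_Psi33 :
    (∀ (F : Type) [CommRing F] (A : Matrix (Fin 3) (Fin 3) F),
        A 2 2 = 0 → A.permanent = (Psi33 A).det) ∧
    (∀ (F : Type) [Field F],
        Set.BijOn Psi33
          {A : Matrix (Fin 3) (Fin 3) F | A.permanent = 0 ∧ A 2 2 = 0}
          {A : Matrix (Fin 3) (Fin 3) F | A.det = 0 ∧ A 2 2 = 0}) := by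
  have h22 : ∀ (F : Type) [CommRing F] (A : Matrix (Fin 3) (Fin 3) F),
      Psi33 A 2 2 = A 2 2 := by
    intro F _ A
    simp [Psi33_apply]
  refine ⟨fun F _ A h => key A h, fun F _ => ?_⟩
  refine ⟨fun A hA => ?_, fun A hA B hB hAB => ?_, fun B hB => ?_⟩
  · exact ⟨by rw [← key A hA.2]; exact hA.1, by rw [h22]; exact hA.2⟩
  · have := congrArg Psi33 hAB
    rwa [Psi33_involutive, Psi33_involutive] at this
  · refine ⟨Psi33 B, ⟨?_, by rw [h22]; exact hB.2⟩, Psi33_involutive B⟩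
    rw [key (Psi33 B) (by rw [h22]; exact hB.2), Psi33_involutive]
    exact hB.1
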